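/- arXiv:2003.12976 — 3 statements merged into one kernel-verified Lean document; each statement's English description precedes it below -/
import Mathlib

section
/- Let x* be a sparsest solution to: minimize ‖x‖₀ subject to ‖y − Ax‖₂ ≤ ε and Bx ≤ b, with support S, and let I = I(x*) be the set of active constraints of Bx* ≤ b. If |I(x*)| is maximal among all sparsest solutions, i.e., |I(x*)| = max{|I(x)| : x ∈ Λ} where Λ is the set of all sparsest solutions, then the matrix M* = [A_S; B_{I,S}] (vertical stacking) has full column rank. -/
open Matrix Finset

/-- The ℓ₂ norm of a finite real vector. -/
noncomputable def l2 {ι : Type*} [Fintype ι] (v : ι → ℝ) : ℝ := Real.sqrt (∑ i, v i ^ 2)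

/-- The ℓ₀ "norm": number of nonzero components. -/
noncomputable def l0 {n : ℕ} (x : Fin n → ℝ) : ℕ :=
  (Finset.univ.filter fun i => x i ≠ 0).card

/-- The support of a vector as a finset. -/
noncomputable def spt {n : ℕ} (x : Fin n → ℝ) : Finset (Fin n) :=
  Finset.univ.filter fun i => x i ≠ 0

/-- Membership in the feasible set T = {x : ‖y - Ax‖₂ ≤ ε, Bx ≤ b}. -/
def feasible {m l n : ℕ} (A : Matrix (Fin m) (Fin n) ℝ) (B : Matrix (Fin l) (Fin n) ℝ)
    (y : Fin m → ℝ) (b : Fin l → ℝ) (ε : ℝ) (x : Fin n → ℝ) : Prop :=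
  l2 (y - A.mulVec x) ≤ ε ∧ ∀ i, B.mulVec x i ≤ b i

/-- x is a sparsest solution: feasible and minimizing ‖·‖₀ over T. -/
noncomputable def sparsest {m l n : ℕ} (A : Matrix (Fin m) (Fin n) ℝ)
    (B : Matrix (Fin l) (Fin n) ℝ) (y : Fin m → ℝ) (b : Fin l → ℝ) (ε : ℝ)
    (x : Fin n → ℝ) : Prop :=
  feasible A B y b ε x ∧ ∀ z, feasible A B y b ε z → l0 x ≤ l0 z

/-- Column submatrix indexed by S. -/
def colSub {m n : ℕ} (A : Matrix (Fin m) (Fin n) ℝ) (S : Finset (Fin n)) :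
    Matrix (Fin m) {j // j ∈ S} ℝ :=
  A.submatrix id Subtype.val

/-- Row-and-column submatrix with rows in I and columns in S. -/
def rcSub {l n : ℕ} (B : Matrix (Fin l) (Fin n) ℝ) (I : Finset (Fin l))
    (S : Finset (Fin n)) : Matrix {i // i ∈ I} {j // j ∈ S} ℝ :=
  B.submatrix Subtype.val Subtype.val

/-- Active index set of the constraints Bx ≤ b at x. -/
noncomputable def activeSet {l n : ℕ} (B : Matrix (Fin l) (Fin n) ℝ) (b : Fin l → ℝ)
    (x : Fin n → ℝ) : Finset (Fin l) :=
  Finset.univ.filter fun i => B.mulVec x i = b i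

/-!
If `d ≠ 0` lies in the kernel of `[A_S; B_{I,S}]`, extend it by zero to `v`. Moving from `x*`
along `±v` leaves `Ax` and the active constraints unchanged and never enlarges the support.
The min-ratio step, the largest one that keeps the inactive constraints satisfied and does not
carry any coordinate on `S` through zero, lands on a feasible point that either has smaller
support, contradicting sparsity, or has the same support and an additional active
constraint, contradicting the maximality of `|I(x*)|`.
-/
theorem exists_pos_min_ratio {κ 𝕜 : Type*} [Field 𝕜] [LinearOrder 𝕜] [IsStrictOrderedRing 𝕜]
    (K : Finset κ) (a c : κ → 𝕜) (ha : ∀ k ∈ K, 0 < a k) (hc : ∃ k ∈ K, c k < 0) :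
    ∃ t > 0, (∀ k ∈ K, 0 ≤ a k + t * c k) ∧ ∃ k ∈ K, a k + t * c k = 0 := by
  classical
  set ratios := (K.filter fun k => c k < 0).image fun k => -a k / c k
  have mem_ratios {k} (hk : k ∈ K) (hck : c k < 0) : -a k / c k ∈ ratios :=
    mem_image_of_mem _ (mem_filter.mpr ⟨hk, hck⟩)
  obtain ⟨k₀, hk₀, hck₀⟩ := hc
  set t := ratios.min' ⟨_, mem_ratios hk₀ hck₀⟩
  obtain ⟨k₁, hk₁, ht⟩ : ∃ k ∈ K.filter (fun k => c k < 0), -a k / c k = t :=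
    mem_image.mp (ratios.min'_mem _)
  obtain ⟨hk₁, hck₁⟩ := mem_filter.mp hk₁
  have ht_pos : 0 < t := ht ▸ div_pos_of_neg_of_neg (neg_neg_of_pos (ha k₁ hk₁)) hck₁
  refine ⟨t, ht_pos, fun k hk => ?_, k₁, hk₁, ?_⟩
  · rcases lt_or_ge (c k) 0 with hck | hck
    · have := (le_div_iff_of_neg hck).mp (ratios.min'_le _ (mem_ratios hk hck))
      linarith
    · have := ha k hk
      positivity
  · rw [← ht, div_mul_cancel₀ _ hck₁.ne]
    ring

section ExtendBySubtype

variable {ι R : Type*} [Fintype ι] [NonUnitalNonAssocSemiring R] {S : Finset ι}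

theorem dotProduct_extend_subtype_val (w : ι → R) (d : S → R) :
    w ⬝ᵥ Function.extend Subtype.val d 0 = ∑ j : S, w j * d j := by
  classical
  have h_out : ∀ i ∈ univ, i ∉ S → w i * Function.extend Subtype.val d 0 i = 0 :=
    fun i _ hi => by
      rw [Function.extend_apply' _ _ _ fun ⟨j, hj⟩ => hi (hj ▸ j.2), Pi.zero_apply, mul_zero]
  rw [dotProduct, ← sum_subset (subset_univ S) h_out, ← sum_coe_sort]
  simp only [Subtype.val_injective.extend_apply]

end ExtendBySubtype

theorem colSub_mulVec {m n : ℕ} (A : Matrix (Fin m) (Fin n) ℝ) (S : Finset (Fin n)) (d : S → ℝ) :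
    colSub A S *ᵥ d = A *ᵥ Function.extend Subtype.val d 0 := by
  ext r
  simp only [mulVec, dotProduct_extend_subtype_val]
  rfl

theorem rcSub_mulVec_apply {l n : ℕ} (B : Matrix (Fin l) (Fin n) ℝ) (I : Finset (Fin l))
    (S : Finset (Fin n)) (d : S → ℝ) (i : I) :
    (rcSub B I S *ᵥ d) i = (B *ᵥ Function.extend Subtype.val d 0) i := by
  simp only [mulVec, dotProduct_extend_subtype_val]
  rfl

theorem spt_extend_subtype_val_subset {n : ℕ} {S : Finset (Fin n)} (d : S → ℝ) :
    spt (Function.extend Subtype.val d 0) ⊆ S := by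
  intro i hi
  by_contra hiS
  rw [spt, mem_filter, Function.extend_apply' _ _ _ fun ⟨j, hj⟩ => hiS (hj ▸ j.2)] at hi
  exact hi.2 rfl

theorem extend_subtype_val_ne_zero {ι R : Type*} [Zero R] {S : Finset ι} {d : S → R}
    (hd : d ≠ 0) :
    Function.extend Subtype.val d 0 ≠ 0 := by
  intro h
  exact hd (funext fun j => by simpa [Subtype.val_injective.extend_apply] using congrFun h j)

section FeasibleStep

variable {m l n : ℕ} {A : Matrix (Fin m) (Fin n) ℝ} {B : Matrix (Fin l) (Fin n) ℝ}
  {y : Fin m → ℝ} {b : Fin l → ℝ} {ε : ℝ} {x v : Fin n → ℝ}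

theorem mem_spt {z : Fin n → ℝ} {j : Fin n} : j ∈ spt z ↔ z j ≠ 0 := by
  simp [spt]

theorem mem_activeSet {z : Fin n → ℝ} {i : Fin l} :
    i ∈ activeSet B b z ↔ (B *ᵥ z) i = b i := by
  simp [activeSet]

theorem exists_feasible_sparser_or_more_active_of_mul_neg (hx : feasible A B y b ε x)
    (hAv : A *ᵥ v = 0) (hBv : ∀ i ∈ activeSet B b x, (B *ᵥ v) i = 0) (hv : spt v ⊆ spt x)
    (hneg : ∃ j, x j * v j < 0) :
    ∃ x', feasible A B y b ε x' ∧ spt x' ⊆ spt x ∧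
      (spt x' ⊂ spt x ∨ activeSet B b x ⊂ activeSet B b x') := by
  obtain ⟨j₀, hj₀⟩ := hneg
  have hj₀x : x j₀ ≠ 0 := fun h => by simp [h] at hj₀
  -- Step to the first zero of a coordinate on `spt x`, tracked as `x j * (x j + t * v j)`
  -- to make it positive at `t = 0`, or of the slack of an inactive constraint.
  obtain ⟨t, -, h_nonneg, k, hk, h_zero⟩ := exists_pos_min_ratio
    ((spt x).disjSum (univ \ activeSet B b x))
    (Sum.elim (fun j => x j ^ 2) fun i => b i - (B *ᵥ x) i)
    (Sum.elim (fun j => x j * v j) fun i => -(B *ᵥ v) i)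
    (by
      rintro (j | i) hk
      · exact pow_two_pos_of_ne_zero (mem_spt.mp (by simpa using hk))
      · have hi : i ∉ activeSet B b x := by simpa using hk
        have := hx.2 i
        rw [mem_activeSet] at hi
        simp only [Sum.elim_inr, sub_pos]
        exact lt_of_le_of_ne this hi)
    ⟨Sum.inl j₀, inl_mem_disjSum.mpr (mem_spt.mpr hj₀x), hj₀⟩
  set x' := x + t • v
  have hAx' : A *ᵥ x' = A *ᵥ x := by simp [x', mulVec_add, mulVec_smul, hAv]
  have hBx' (i) : (B *ᵥ x') i = (B *ᵥ x) i + t * (B *ᵥ v) i := by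
    simp [x', mulVec_add, mulVec_smul]
  have h_active {i} (hi : i ∈ activeSet B b x) : i ∈ activeSet B b x' := by
    rw [mem_activeSet, hBx', hBv i hi, mul_zero, add_zero, ← mem_activeSet]
    exact hi
  have h_spt : spt x' ⊆ spt x := fun j hj => by
    by_contra hjx
    have hvj : v j = 0 := by_contra fun h => hjx (hv (mem_spt.mpr h))
    simp_all [x', mem_spt]
  refine ⟨x', ⟨hAx' ▸ hx.1, fun i => ?_⟩, h_spt, ?_⟩
  · by_cases hi : i ∈ activeSet B b x
    · exact (mem_activeSet.mp (h_active hi)).le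
    · have := h_nonneg (Sum.inr i) (by simpa using hi)
      simp only [Sum.elim_inr] at this
      rw [hBx']
      linarith
  rcases k with j | i
  · left
    simp only [inl_mem_disjSum, Sum.elim_inl] at hk h_zero
    refine (ssubset_iff_of_subset h_spt).mpr ⟨j, hk, fun hj => mem_spt.mp hj ?_⟩
    have : x j * x' j = 0 := by
      simp only [x', Pi.add_apply, Pi.smul_apply, smul_eq_mul]
      linear_combination h_zero
    exact (mul_eq_zero.mp this).resolve_left (mem_spt.mp hk)
  · right
    simp only [inr_mem_disjSum, Sum.elim_inr, mem_sdiff] at hk h_zero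
    refine (ssubset_iff_of_subset fun i => h_active).mpr ⟨i, ?_, hk.2⟩
    rw [mem_activeSet, hBx']
    linarith

theorem exists_feasible_sparser_or_more_active (hx : feasible A B y b ε x)
    (hAv : A *ᵥ v = 0) (hBv : ∀ i ∈ activeSet B b x, (B *ᵥ v) i = 0) (hv : spt v ⊆ spt x)
    (hv0 : v ≠ 0) :
    ∃ x', feasible A B y b ε x' ∧ spt x' ⊆ spt x ∧
      (spt x' ⊂ spt x ∨ activeSet B b x ⊂ activeSet B b x') := by
  obtain ⟨j, hj⟩ := Function.ne_iff.mp hv0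
  have hxj : x j * v j ≠ 0 := mul_ne_zero (mem_spt.mp (hv (mem_spt.mpr hj))) hj
  rcases hxj.lt_or_gt with hneg | hpos
  · exact exists_feasible_sparser_or_more_active_of_mul_neg hx hAv hBv hv ⟨j, hneg⟩
  · refine exists_feasible_sparser_or_more_active_of_mul_neg hx (v := -v)
      (by rw [mulVec_neg, hAv, neg_zero]) (fun i hi => by simp [mulVec_neg, hBv i hi])
      (fun j hj => hv (by simpa [mem_spt] using hj)) ⟨j, by simpa using hpos⟩

end FeasibleStep

theorem stmt2_general {m l n : ℕ} (A : Matrix (Fin m) (Fin n) ℝ) (B : Matrix (Fin l) (Fin n) ℝ)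
    (y : Fin m → ℝ) (b : Fin l → ℝ) (ε : ℝ)
    (xs : Fin n → ℝ) (hxs : sparsest A B y b ε xs)
    (S : Finset (Fin n)) (hS : S = spt xs)
    (I : Finset (Fin l)) (hI : I = activeSet B b xs)
    (hmax : ∀ z : Fin n → ℝ, sparsest A B y b ε z →
      (activeSet B b z).card ≤ I.card) :
    ∀ d : {j // j ∈ S} → ℝ,
      (colSub A S).mulVec d = 0 → (rcSub B I S).mulVec d = 0 → d = 0 := by
  intro d hA hB
  by_contra hd
  subst hS hI
  obtain ⟨x', hx', h_spt, h_sparser | h_more_active⟩ :=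
    exists_feasible_sparser_or_more_active hxs.1 (v := Function.extend Subtype.val d 0)
      (colSub_mulVec A _ d ▸ hA)
      (fun i hi => rcSub_mulVec_apply B _ _ d ⟨i, hi⟩ ▸ congrFun hB ⟨i, hi⟩)
      (spt_extend_subtype_val_subset d) (extend_subtype_val_ne_zero hd)
  · exact (card_lt_card h_sparser).not_ge (hxs.2 x' hx')
  · have hx'_sparsest : sparsest A B y b ε x' :=
      ⟨hx', fun z hz => (card_le_card h_spt).trans (hxs.2 z hz)⟩
    exact (card_lt_card h_more_active).not_ge (hmax x' hx'_sparsest)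

/-- if x* is a sparsest solution with maximal number of active
constraints, then M* = [A_S; B_{I,S}] has full column rank. -/
theorem stmt2 {m l n : ℕ} (A : Matrix (Fin m) (Fin n) ℝ) (B : Matrix (Fin l) (Fin n) ℝ)
    (y : Fin m → ℝ) (b : Fin l → ℝ) (ε : ℝ) (hε : 0 ≤ ε)
    (xs : Fin n → ℝ) (hxs : sparsest A B y b ε xs)
    (S : Finset (Fin n)) (hS : S = spt xs)
    (I : Finset (Fin l)) (hI : I = activeSet B b xs)
    (hmax : ∀ z : Fin n → ℝ, sparsest A B y b ε z →
      (activeSet B b z).card ≤ I.card) :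
    ∀ d : {j // j ∈ S} → ℝ,
      (colSub A S).mulVec d = 0 → (rcSub B I S).mulVec d = 0 → d = 0 :=
  stmt2_general A B y b ε xs hxs S hS I hI hmax
end

section
/- Let x* be a sparsest solution with support S and active index set I for the constraints Bx ≤ b. Assume the residual satisfies ‖y − Ax*‖₂ < ε, the stacked matrix [A_S; B_{I,S}] has trivial null space, and Null(B_S) ≠ {0}. Then there are infinitely many sparsest solutions with the same support S as x*. -/
open Matrix Finset

/-! Extending a nonzero `μ ∈ Null(B_S)` by zero gives a direction `v ≠ 0` with `supp v ⊆ S` and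
`B v = 0`. Moving `x*` along `v` leaves `B x` unchanged, and since the residual is strictly below
`ε` the points `x* + t v` stay feasible for all small `t`. Their support lies in `S`, and by
minimality of `‖x*‖₀` it cannot be smaller, so each of them is a sparsest solution with support
`S`. -/

theorem continuous_l2 {ι : Type*} [Fintype ι] : Continuous (l2 : (ι → ℝ) → ℝ) := by
  unfold l2
  fun_prop

noncomputable def zeroExtend {n : ℕ} (S : Finset (Fin n)) (μ : {j // j ∈ S} → ℝ) :
    Fin n → ℝ :=
  fun j => if h : j ∈ S then μ ⟨j, h⟩ else 0

section zeroExtend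

variable {n : ℕ} {S : Finset (Fin n)}

theorem zeroExtend_apply_of_mem (μ : {j // j ∈ S} → ℝ) (j : {j // j ∈ S}) :
    zeroExtend S μ j = μ j := by
  simp [zeroExtend, j.prop]

theorem zeroExtend_apply_of_not_mem (μ : {j // j ∈ S} → ℝ) {j : Fin n} (hj : j ∉ S) :
    zeroExtend S μ j = 0 := by
  simp [zeroExtend, hj]

theorem zeroExtend_ne_zero {μ : {j // j ∈ S} → ℝ} (hμ : μ ≠ 0) : zeroExtend S μ ≠ 0 := by
  refine fun h => hμ (funext fun j => ?_)
  simpa [zeroExtend_apply_of_mem] using congrFun h j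

theorem spt_zeroExtend_subset (μ : {j // j ∈ S} → ℝ) : spt (zeroExtend S μ) ⊆ S := by
  intro j hj
  by_contra hjS
  simp [spt, zeroExtend_apply_of_not_mem μ hjS] at hj

theorem mulVec_zeroExtend {l : ℕ} (B : Matrix (Fin l) (Fin n) ℝ) (μ : {j // j ∈ S} → ℝ) :
    B *ᵥ zeroExtend S μ = colSub B S *ᵥ μ := by
  funext i
  simp only [mulVec, dotProduct, colSub, submatrix_apply, id_eq]
  rw [← Finset.sum_subset (Finset.subset_univ S) fun j _ hj => by
      rw [zeroExtend_apply_of_not_mem μ hj, mul_zero],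
    ← Finset.sum_attach S, ← Finset.univ_eq_attach]
  simp only [zeroExtend_apply_of_mem]

end zeroExtend

theorem spt_add_smul_subset {n : ℕ} {x v : Fin n → ℝ} (hv : spt v ⊆ spt x) (t : ℝ) :
    spt (x + t • v) ⊆ spt x := by
  intro j hj
  by_contra hjx
  have hvj : v j = 0 := by simpa [spt] using mt (@hv j) hjx
  simp_all [spt]

theorem eventually_feasible_add_smul {m l n : ℕ} {A : Matrix (Fin m) (Fin n) ℝ}
    {B : Matrix (Fin l) (Fin n) ℝ} {y : Fin m → ℝ} {b : Fin l → ℝ} {ε : ℝ} {x v : Fin n → ℝ}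
    (hx : feasible A B y b ε x) (hres : l2 (y - A *ᵥ x) < ε) (hBv : B *ᵥ v = 0) :
    ∀ᶠ t in nhds (0 : ℝ), feasible A B y b ε (x + t • v) := by
  have hcont : Continuous fun t : ℝ => l2 (y - A *ᵥ (x + t • v)) := by
    simp only [mulVec_add, mulVec_smul]
    exact continuous_l2.comp (by fun_prop)
  have hnear : ∀ᶠ t in nhds (0 : ℝ), l2 (y - A *ᵥ (x + t • v)) < ε :=
    hcont.continuousAt.eventually_lt continuousAt_const (by simpa using hres)
  filter_upwards [hnear] with t ht
  refine ⟨ht.le, fun i => ?_⟩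
  rw [mulVec_add, mulVec_smul, hBv, smul_zero, add_zero]
  exact hx.2 i

theorem sparsest_of_feasible_of_spt_subset {m l n : ℕ} {A : Matrix (Fin m) (Fin n) ℝ}
    {B : Matrix (Fin l) (Fin n) ℝ} {y : Fin m → ℝ} {b : Fin l → ℝ} {ε : ℝ} {x z : Fin n → ℝ}
    (hx : sparsest A B y b ε x) (hz : feasible A B y b ε z) (hzx : spt z ⊆ spt x) :
    sparsest A B y b ε z ∧ spt z = spt x := by
  have hspt : spt z = spt x := Finset.eq_of_subset_of_card_le hzx (hx.2 z hz)
  have hl0 : l0 z = l0 x := congrArg Finset.card hspt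
  exact ⟨⟨hz, fun w hw => hl0 ▸ hx.2 w hw⟩, hspt⟩

theorem stmt4_general {m l n : ℕ} (A : Matrix (Fin m) (Fin n) ℝ) (B : Matrix (Fin l) (Fin n) ℝ)
    (y : Fin m → ℝ) (b : Fin l → ℝ) (ε : ℝ)
    (xs : Fin n → ℝ) (hxs : sparsest A B y b ε xs)
    (hres : l2 (y - A.mulVec xs) < ε)
    (S : Finset (Fin n)) (hS : S = spt xs)
    (hBS : ∃ μ : {j // j ∈ S} → ℝ, μ ≠ 0 ∧ (colSub B S).mulVec μ = 0) :
    {z : Fin n → ℝ | sparsest A B y b ε z ∧ spt z = S}.Infinite := by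
  subst hS
  obtain ⟨μ, hμ, hBμ⟩ := hBS
  set v := zeroExtend (spt xs) μ
  have hBv : B *ᵥ v = 0 := by rw [mulVec_zeroExtend, hBμ]
  have hline : Function.Injective fun t : ℝ => xs + t • v :=
    (add_right_injective xs).comp (smul_left_injective ℝ (zeroExtend_ne_zero hμ))
  refine ((infinite_of_mem_nhds 0 (eventually_feasible_add_smul hxs.1 hres hBv)).image
    hline.injOn).mono ?_
  rintro _ ⟨t, ht, rfl⟩
  exact sparsest_of_feasible_of_spt_subset hxs ht (spt_add_smul_subset (spt_zeroExtend_subset μ) t)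

/-- case C2: strict residual, Null([A_S; B_{I,S}]) = {0} and
Null(B_S) ≠ {0} give infinitely many sparsest solutions with the same support. -/
theorem stmt4 {m l n : ℕ} (A : Matrix (Fin m) (Fin n) ℝ) (B : Matrix (Fin l) (Fin n) ℝ)
    (y : Fin m → ℝ) (b : Fin l → ℝ) (ε : ℝ) (hε : 0 < ε)
    (xs : Fin n → ℝ) (hxs : sparsest A B y b ε xs)
    (hres : l2 (y - A.mulVec xs) < ε)
    (S : Finset (Fin n)) (hS : S = spt xs)
    (I : Finset (Fin l)) (hI : I = activeSet B b xs)
    (hker : ∀ d : {j // j ∈ S} → ℝ,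
      (colSub A S).mulVec d = 0 → (rcSub B I S).mulVec d = 0 → d = 0)
    (hBS : ∃ μ : {j // j ∈ S} → ℝ, μ ≠ 0 ∧ (colSub B S).mulVec μ = 0) :
    {z : Fin n → ℝ | sparsest A B y b ε z ∧ spt z = S}.Infinite :=
  stmt4_general A B y b ε xs hxs hres S hS hBS
end

section
/- Suppose a sequence (x^p) of vectors in T = {x : ‖y − Ax‖₂ ≤ ε, Bx ≤ b}, each with ‖x^p‖₀ = k, satisfies: there is a fixed nonempty index set S₁ such that |x^p_i| → ∞ for all i ∈ S₁, and the components x^p_i for i ∈ S₂ = supp(x^p) \ S₁ (with S₂ fixed) remain bounded. Then there exists a nonzero unit vector η̄ ∈ ℝ^{S₁} with A_{S₁} η̄ = 0 and B_{S₁} η̄ ≤ 0 (componentwise). -/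
open Matrix Finset

/-! Split `x p` into its part on `S₁`, which blows up, and its part on `S₁ᶜ`, which stays
bounded. Then `A_{S₁} x_{S₁}` stays bounded (since `‖y - A x‖₂ ≤ ε`) and `B_{S₁} x_{S₁}` stays
bounded above (since `B x ≤ b`). Dividing by `‖x_{S₁}‖₂ → ∞`, a limit point of the normalized
vectors on the (compact) unit sphere is the required `η`. -/

open Filter Topology Metric

lemma l2_eq_norm_toLp {ι : Type*} [Fintype ι] (v : ι → ℝ) :
    l2 v = ‖(WithLp.toLp 2 v : EuclideanSpace ℝ ι)‖ := by
  simp [l2, EuclideanSpace.norm_eq]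

lemma norm_le_l2 {ι : Type*} [Fintype ι] (v : ι → ℝ) : ‖v‖ ≤ l2 v := by
  rw [l2_eq_norm_toLp]
  exact (pi_norm_le_iff_of_nonneg (norm_nonneg _)).2 fun i =>
    PiLp.norm_apply_le (WithLp.toLp 2 v) i

lemma abs_le_l2 {ι : Type*} [Fintype ι] (v : ι → ℝ) (i : ι) : |v i| ≤ l2 v :=
  (norm_le_pi_norm v i).trans (norm_le_l2 v)

theorem exists_subseq_tendsto_normalize {E : Type*} [NormedAddCommGroup E] [NormedSpace ℝ E]
    [ProperSpace E] {v : ℕ → E} (hv : Tendsto (fun p => ‖v p‖) atTop atTop) :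
    ∃ η, ‖η‖ = 1 ∧ ∃ φ : ℕ → ℕ, StrictMono φ ∧
      Tendsto (fun p => ‖v (φ p)‖⁻¹ • v (φ p)) atTop (𝓝 η) := by
  have hsphere : ∀ᶠ p in atTop, ‖v p‖⁻¹ • v p ∈ sphere (0 : E) 1 :=
    (hv.eventually_gt_atTop 0).mono fun p hp => by
      simp [norm_smul, hp.ne']
  obtain ⟨η, hη, φ, hφ, hlim⟩ :=
    (isCompact_sphere (0 : E) 1).tendsto_subseq' hsphere.frequently
  exact ⟨η, by simpa using hη, φ, hφ, hlim⟩

theorem exists_l2_eq_one_mulVec_eq_zero_and_mulVec_nonpos {ι κ μ : Type*} [Fintype ι]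
    [Fintype κ] [Fintype μ] (A : Matrix κ ι ℝ) (B : Matrix μ ι ℝ) {v : ℕ → ι → ℝ}
    (hv : Tendsto (fun p => l2 (v p)) atTop atTop)
    (hA : ∃ R, ∀ p, ‖A *ᵥ v p‖ ≤ R) (hB : ∃ K, ∀ p, B *ᵥ v p ≤ K) :
    ∃ η, l2 η = 1 ∧ A *ᵥ η = 0 ∧ B *ᵥ η ≤ 0 := by
  obtain ⟨R, hR⟩ := hA
  obtain ⟨K, hK⟩ := hB
  simp only [l2_eq_norm_toLp] at hv
  obtain ⟨ζ, hζ, φ, hφ, hlim⟩ := exists_subseq_tendsto_normalize hv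
  set N := fun p => l2 (v (φ p))
  have hN : Tendsto N atTop atTop := by
    simp only [N, l2_eq_norm_toLp]
    exact hv.comp hφ.tendsto_atTop
  have hN₀ : ∀ p, 0 ≤ (N p)⁻¹ := fun p => inv_nonneg.2 (Real.sqrt_nonneg _)
  have hinv : Tendsto (fun p => (N p)⁻¹) atTop (𝓝 0) := tendsto_inv_atTop_zero.comp hN
  have hu : Tendsto (fun p => (N p)⁻¹ • v (φ p)) atTop (𝓝 ζ.ofLp) := by
    simpa [N, l2_eq_norm_toLp, Function.comp_def] using
      ((PiLp.continuous_ofLp 2 _).tendsto ζ).comp hlim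
  refine ⟨ζ.ofLp, by rwa [l2_eq_norm_toLp], ?_, ?_⟩
  · have hlimA : Tendsto (fun p => A *ᵥ ((N p)⁻¹ • v (φ p))) atTop (𝓝 (A *ᵥ ζ.ofLp)) :=
      ((continuous_const.matrix_mulVec continuous_id).tendsto _).comp hu
    refine tendsto_nhds_unique hlimA
      (squeeze_zero_norm (fun p => ?_) (by simpa using hinv.mul_const R))
    rw [mulVec_smul, norm_smul, Real.norm_eq_abs, abs_of_nonneg (hN₀ p)]
    exact mul_le_mul_of_nonneg_left (hR _) (hN₀ p)
  · have hlimB : Tendsto (fun p => B *ᵥ ((N p)⁻¹ • v (φ p))) atTop (𝓝 (B *ᵥ ζ.ofLp)) :=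
      ((continuous_const.matrix_mulVec continuous_id).tendsto _).comp hu
    refine le_of_tendsto_of_tendsto' hlimB (by simpa using hinv.smul_const K) fun p => ?_
    rw [mulVec_smul]
    exact smul_le_smul_of_nonneg_left (hK _) (hN₀ p)

lemma exists_forall_norm_mulVec_le {ι κ : Type*} [Fintype ι] [Fintype κ] (M : Matrix κ ι ℝ)
    (C : ℝ) : ∃ R, ∀ w, ‖w‖ ≤ C → ‖M *ᵥ w‖ ≤ R := by
  obtain ⟨R, hR⟩ := isBounded_iff_forall_norm_le.1 ((isCompact_closedBall (0 : ι → ℝ) C).image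
    (continuous_const.matrix_mulVec (A := fun _ : ι → ℝ => M) continuous_id)).isBounded
  exact ⟨R, fun w hw => hR _ ⟨w, by simpa using hw, rfl⟩⟩

lemma mulVec_eq_colSub_mulVec_add_colSub_compl_mulVec {m n : ℕ} (A : Matrix (Fin m) (Fin n) ℝ)
    (S : Finset (Fin n)) (x : Fin n → ℝ) :
    A *ᵥ x = colSub A S *ᵥ (fun j => x j) + colSub A Sᶜ *ᵥ (fun j => x j) := by
  ext r
  simp only [Pi.add_apply, mulVec, dotProduct, colSub, submatrix_apply, id_eq,
    Finset.sum_coe_sort S (fun j => A r j * x j), Finset.sum_coe_sort Sᶜ (fun j => A r j * x j)]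
  exact (Finset.sum_add_sum_compl S _).symm

lemma norm_colSub_mulVec_le {m n : ℕ} (A : Matrix (Fin m) (Fin n) ℝ) (S : Finset (Fin n))
    (x : Fin n → ℝ) :
    ‖colSub A S *ᵥ (fun j => x j)‖ ≤ ‖A *ᵥ x‖ + ‖colSub A Sᶜ *ᵥ (fun j => x j)‖ := by
  rw [eq_sub_of_add_eq (mulVec_eq_colSub_mulVec_add_colSub_compl_mulVec A S x).symm]
  exact norm_sub_le _ _

lemma colSub_mulVec_le {m n : ℕ} (A : Matrix (Fin m) (Fin n) ℝ) (S : Finset (Fin n))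
    (x : Fin n → ℝ) :
    colSub A S *ᵥ (fun j => x j) ≤ A *ᵥ x + fun _ => ‖colSub A Sᶜ *ᵥ (fun j => x j)‖ := by
  intro r
  rw [eq_sub_of_add_eq (mulVec_eq_colSub_mulVec_add_colSub_compl_mulVec A S x).symm]
  simpa [sub_eq_add_neg] using (neg_le_abs _).trans
    ((Real.norm_eq_abs _).symm.le.trans (norm_le_pi_norm _ r))

lemma norm_restrict_compl_le {n : ℕ} {x : Fin n → ℝ} {S₁ S₂ : Finset (Fin n)} {C : ℝ}
    (hS₂ : spt x \ S₁ = S₂) (hC : ∀ i ∈ S₂, |x i| ≤ C) :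
    ‖(fun j : {j // j ∈ S₁ᶜ} => x j)‖ ≤ max C 0 := by
  refine (pi_norm_le_iff_of_nonneg (le_max_right _ _)).2 fun j => ?_
  by_cases h0 : x j = 0
  · simp [h0]
  · have hj : (j : Fin n) ∈ S₂ :=
      hS₂ ▸ mem_sdiff.2 ⟨by simpa [spt] using h0, mem_compl.1 j.2⟩
    exact (Real.norm_eq_abs _).trans_le ((hC j hj).trans (le_max_left _ _))

theorem stmt16_general {m l n : ℕ} (A : Matrix (Fin m) (Fin n) ℝ) (B : Matrix (Fin l) (Fin n) ℝ)
    (y : Fin m → ℝ) (b : Fin l → ℝ) (ε : ℝ)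
    (x : ℕ → Fin n → ℝ)
    (hfeas : ∀ p, feasible A B y b ε (x p))
    (S₁ S₂ : Finset (Fin n)) (hS₁ : S₁.Nonempty)
    (hblow : ∀ i ∈ S₁, Filter.Tendsto (fun p => |x p i|) Filter.atTop Filter.atTop)
    (hS₂ : ∀ p, spt (x p) \ S₁ = S₂)
    (hbdd : ∃ C : ℝ, ∀ p, ∀ i ∈ S₂, |x p i| ≤ C) :
    ∃ η : {j // j ∈ S₁} → ℝ, η ≠ 0 ∧ l2 η = 1 ∧
      (colSub A S₁).mulVec η = 0 ∧ ∀ i, (colSub B S₁).mulVec η i ≤ 0 := by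
  obtain ⟨i₀, hi₀⟩ := hS₁
  obtain ⟨C, hC⟩ := hbdd
  have htail p := norm_restrict_compl_le (hS₂ p) (hC p)
  obtain ⟨RA, hRA⟩ := exists_forall_norm_mulVec_le (colSub A S₁ᶜ) (max C 0)
  obtain ⟨RB, hRB⟩ := exists_forall_norm_mulVec_le (colSub B S₁ᶜ) (max C 0)
  have hA p : ‖colSub A S₁ *ᵥ (fun j => x p j)‖ ≤ ‖y‖ + ε + RA := by
    have hAx : ‖A *ᵥ x p‖ ≤ ‖y‖ + ε :=
      (norm_le_insert y _).trans (add_le_add_right ((norm_le_l2 _).trans (hfeas p).1) _)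
    exact (norm_colSub_mulVec_le A S₁ (x p)).trans (add_le_add hAx (hRA _ (htail p)))
  have hB p : colSub B S₁ *ᵥ (fun j => x p j) ≤ b + fun _ => RB :=
    (colSub_mulVec_le B S₁ (x p)).trans (add_le_add (hfeas p).2 fun _ => hRB _ (htail p))
  have hv : Tendsto (fun p => l2 (fun j : {j // j ∈ S₁} => x p j)) atTop atTop :=
    tendsto_atTop_mono (fun p => abs_le_l2 _ ⟨i₀, hi₀⟩) (hblow i₀ hi₀)
  obtain ⟨η, hη, hAη, hBη⟩ :=
    exists_l2_eq_one_mulVec_eq_zero_and_mulVec_nonpos _ _ hv ⟨_, hA⟩ ⟨_, hB⟩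
  exact ⟨η, fun h => by simp [h, l2] at hη, hη, hAη, hBη⟩

/-- an unbounded sequence of k-sparse feasible points with blow-up on a
fixed index set S₁ and boundedness on the remaining support produces a unit vector in
Null(A_{S₁}) with B_{S₁} η̄ ≤ 0. -/
theorem stmt16 {m l n : ℕ} (A : Matrix (Fin m) (Fin n) ℝ) (B : Matrix (Fin l) (Fin n) ℝ)
    (y : Fin m → ℝ) (b : Fin l → ℝ) (ε : ℝ) (hε : 0 ≤ ε) (k : ℕ)
    (x : ℕ → Fin n → ℝ)
    (hfeas : ∀ p, feasible A B y b ε (x p)) (hk : ∀ p, l0 (x p) = k)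
    (S₁ S₂ : Finset (Fin n)) (hS₁ : S₁.Nonempty)
    (hblow : ∀ i ∈ S₁, Filter.Tendsto (fun p => |x p i|) Filter.atTop Filter.atTop)
    (hS₂ : ∀ p, spt (x p) \ S₁ = S₂)
    (hbdd : ∃ C : ℝ, ∀ p, ∀ i ∈ S₂, |x p i| ≤ C) :
    ∃ η : {j // j ∈ S₁} → ℝ, η ≠ 0 ∧ l2 η = 1 ∧
      (colSub A S₁).mulVec η = 0 ∧ ∀ i, (colSub B S₁).mulVec η i ≤ 0 :=
  stmt16_general A B y b ε x hfeas S₁ S₂ hS₁ hblow hS₂ hbdd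
end
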